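/- Let H : Fin 3 → Fin 3 → Matrix (Fin 2) (Fin 2) ℝ be defined by H i j = identity matrix for i ≠ j, H 1 1 = H 2 2 = diagonal(1, −1), and H 3 3 = diagonal(−1, 1), and let v = (1,1) ∈ ℝ². Then for every i ∈ Fin 3, the pair of vectors {v, (H i i)·v} is linearly independent in ℝ² (equivalently, spans all of ℝ²), while for every j ≠ i the interference vector (H i j)·v lies in the span of v. -/

import Mathlib

open Matrix

/-- The two-carrier channel matrices of the counterexample:
`H i j = I` for `i ≠ j`, `H 1 1 = H 2 2 = diag(1,-1)`, `H 3 3 = diag(-1,1)`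
(users `1,2,3` are indexed by `0,1,2 : Fin 3`). -/
def chan : Fin 3 → Fin 3 → Matrix (Fin 2) (Fin 2) ℝ :=
  ![![Matrix.diagonal ![1, -1], 1, 1],
    ![1, Matrix.diagonal ![1, -1], 1],
    ![1, 1, Matrix.diagonal ![-1, 1]]]

theorem linearIndependent_pair_iff_det_ne_zero {K : Type*} [Field K] {u w : Fin 2 → K} :
    LinearIndependent K ![u, w] ↔ u 0 * w 1 - u 1 * w 0 ≠ 0 := by
  have h := linearIndependent_rows_iff_isUnit (A := of ![u, w])
  rwa [isUnit_iff_isUnit_det, isUnit_iff_ne_zero, det_fin_two] at h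

theorem span_pair_eq_top_of_linearIndependent {K V : Type*} [DivisionRing K] [AddCommGroup V]
    [Module K V] (hV : Module.finrank K V = 2) {u w : V} (h : LinearIndependent K ![u, w]) :
    Submodule.span K {u, w} = ⊤ := by
  rw [← range_cons_cons_empty u w ![]]
  exact h.span_eq_top_of_card_eq_finrank (by simp [hV])

theorem chan_of_ne {i j : Fin 3} (h : j ≠ i) : chan i j = 1 := by
  fin_cases i <;> fin_cases j <;> simp_all [chan]

theorem chan_self_mulVec_ne (i : Fin 3) :
    (chan i i *ᵥ ![1, 1]) 0 ≠ (chan i i *ᵥ ![1, 1]) 1 := by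
  fin_cases i <;> norm_num [chan]

/-- Dimension counting form of interference alignment: at each receiver `i`, the
desired direction `(H i i)·v` together with the beamforming vector `v = (1,1)` is
linearly independent (equivalently spans ℝ²), while every interference vector
`(H i j)·v`, `j ≠ i`, lies in the one-dimensional subspace `span {v}`. -/
theorem alignment_dimension_count :
    let v : Fin 2 → ℝ := ![1, 1]
    ∀ i : Fin 3,
      LinearIndependent ℝ ![v, (chan i i).mulVec v] ∧
      Submodule.span ℝ {v, (chan i i).mulVec v} = (⊤ : Submodule ℝ (Fin 2 → ℝ)) ∧
      ∀ j : Fin 3, j ≠ i → (chan i j).mulVec v ∈ Submodule.span ℝ {v} := by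
  intro v i
  have hli : LinearIndependent ℝ ![v, chan i i *ᵥ v] := by
    rw [linearIndependent_pair_iff_det_ne_zero]
    -- with `v = (1, 1)` the determinant of `(v, w)` is `w 1 - w 0`
    show 1 * _ - 1 * _ ≠ 0
    rw [one_mul, one_mul, sub_ne_zero]
    exact (chan_self_mulVec_ne i).symm
  refine ⟨hli, span_pair_eq_top_of_linearIndependent (by simp) hli, fun j hj => ?_⟩
  rw [chan_of_ne hj, one_mulVec]
  exact Submodule.mem_span_singleton_self v
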